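/- Let G be a group acting by isometries on a real tree T such that: (i) every subgroup of G that stabilizes an arc of T pointwise has a nilpotent subgroup of index at most k (for a uniform integer k); (ii) every group that fixes a tripod of T pointwise is finitely generated. Then the pointwise stabilizer of every unstable arc of T contains a subgroup of index at most k! that fixes a tripod of T pointwise; in particular it is finitely generated. -/

import Mathlib

open Pointwise

/-- `MBtw x y z`: `y` lies on the geodesic segment from `x` to `z` (metric betweenness). -/
def MBtw {T : Type*} [MetricSpace T] (x y z : T) : Prop :=
  dist x y + dist y z = dist x z

/-- The (metric) segment from `x` to `z`. -/
def seg {T : Type*} [MetricSpace T] (x z : T) : Set T := {y | MBtw x y z}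

/-- A subset is (metrically) convex if it contains the segment between any two of its points. -/
def MConvex {T : Type*} [MetricSpace T] (S : Set T) : Prop :=
  ∀ x ∈ S, ∀ z ∈ S, seg x z ⊆ S

/-- A real tree: a geodesic metric space which is 0-hyperbolic (four-point condition). -/
class RealTree (T : Type*) [MetricSpace T] : Prop where
  exists_btw : ∀ x z : T, ∀ r ∈ Set.Icc (0 : ℝ) (dist x z), ∃ y, MBtw x y z ∧ dist x y = r
  fourPoint : ∀ x y z w : T,
    dist x y + dist z w ≤ max (dist x z + dist y w) (dist x w + dist y z)

/-- An arc: a nondegenerate segment. -/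
def IsArc {T : Type*} [MetricSpace T] (I : Set T) : Prop :=
  ∃ a b : T, a ≠ b ∧ I = seg a b

/-- A minimal action: no proper nonempty invariant subtree. -/
def MinimalAction (G T : Type*) [Group G] [MetricSpace T] [MulAction G T] : Prop :=
  ∀ Y : Set T, Y.Nonempty → MConvex Y → (∀ g : G, g • Y = Y) → Y = Set.univ

/-- `Y` is an indecomposable subtree for the `G`-action: it is nondegenerate, and every arc
`J ⊆ Y` is covered by finitely many `G`-translates of any arc `I ⊆ Y`, with consecutive
translates overlapping in a nondegenerate intersection. -/
def Indecomposable (G : Type*) {T : Type*} [Group G] [MetricSpace T] [MulAction G T]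
    (Y : Set T) : Prop :=
  (∃ I, IsArc I ∧ I ⊆ Y) ∧
  ∀ I J : Set T, IsArc I → I ⊆ Y → IsArc J → J ⊆ Y →
    ∃ n : ℕ, ∃ g : Fin (n + 1) → G,
      J ⊆ ⋃ i, g i • I ∧
      ∀ i : Fin n, ∃ A, IsArc A ∧ A ⊆ (g i.castSucc • I) ∩ (g i.succ • I)

/-- The pointwise stabilizer of a subset. -/
def ptStab (G : Type*) {T : Type*} [Group G] [MulAction G T] (X : Set T) : Subgroup G where
  carrier := {g : G | ∀ x ∈ X, g • x = x}
  one_mem' := fun x _ => one_smul G x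
  mul_mem' := by
    intro a b ha hb x hx
    rw [mul_smul, hb x hx, ha x hx]
  inv_mem' := by
    intro a ha x hx
    nth_rewrite 1 [← ha x hx]
    exact inv_smul_smul a x

/-- A tripod: the union of three nondegenerate segments meeting at a common endpoint O,
with pairwise intersection {O}. -/
def IsTripod {T : Type*} [MetricSpace T] (X : Set T) : Prop :=
  ∃ O a b c : T, O ≠ a ∧ O ≠ b ∧ O ≠ c ∧
    X = seg O a ∪ seg O b ∪ seg O c ∧
    seg O a ∩ seg O b = {O} ∧ seg O a ∩ seg O c = {O} ∧ seg O b ∩ seg O c = {O}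

/-!
Let `A ⊊ B` be the stabilizers of the arc `I` and of the subarc `J`. An element `h ∈ B \ A`
fixes the endpoints of `J` and moves some `x ∈ I`, so the midpoint `O` of `[x, h x]` is fixed by
`h` and lies on `I`, and `I ∪ [O, h x]` is a tripod inside `I ∪ h I`. It is fixed by every
subgroup of `A` normalized by `h`. Such a subgroup of index at most `k!` in `A` exists: if a
nilpotent subgroup `N` of index at most `k` in `B` lies in `A`, take the normal core of `A` in
`B`; otherwise `N ∩ A` is a proper subgroup of the nilpotent group `N`, so its normalizer in `N`
contains an element outside `A`. The tripod stabilizer, being finitely generated and of finite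
index in `A`, makes `A` finitely generated.
-/

section Betweenness

variable {T : Type*} [MetricSpace T] {u v w x y z O : T}

theorem MBtw.symm (h : MBtw x y z) : MBtw z y x := by
  unfold MBtw at *
  linarith [dist_comm x y, dist_comm y z, dist_comm x z]

theorem mbtw_self_left (x z : T) : MBtw x x z := by simp [MBtw]

theorem mbtw_self_right (x z : T) : MBtw x z z := by simp [MBtw]

theorem MBtw.eq_of_left_eq_right (h : MBtw x y x) : y = x := by
  unfold MBtw at h
  rw [dist_self, dist_comm y x] at h
  exact (dist_le_zero.mp (by linarith)).symm

theorem mem_seg : y ∈ seg x z ↔ MBtw x y z := Iff.rfl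

theorem seg_comm (x z : T) : seg x z = seg z x :=
  Set.ext fun _ => ⟨MBtw.symm, MBtw.symm⟩

theorem MBtw.trans_left (h₁ : MBtw w y z) (h₂ : MBtw w x y) : MBtw w x z := by
  unfold MBtw at *
  linarith [dist_triangle w x z, dist_triangle x y z]

theorem MBtw.trans_left_right (h₁ : MBtw w y z) (h₂ : MBtw w x y) : MBtw x y z := by
  unfold MBtw at *
  linarith [dist_triangle x y z, dist_triangle w x z]

theorem seg_inter_seg_of_mbtw (h : MBtw u O v) : seg O u ∩ seg O v = {O} := by
  refine Set.eq_singleton_iff_unique_mem.mpr ⟨⟨mbtw_self_left O u, mbtw_self_left O v⟩, ?_⟩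
  rintro p ⟨hpu, hpv⟩
  rw [mem_seg] at hpu hpv
  unfold MBtw at *
  have : dist O p ≤ 0 := by linarith [dist_triangle u p v, dist_comm u p, dist_comm u O]
  exact (dist_le_zero.mp this).symm

end Betweenness

section RealTree

variable {T : Type*} [MetricSpace T] [RealTree T] {a b e p q s u v w x y z O : T}

theorem MBtw.of_dist_le (hy : MBtw a y b) (hz : MBtw a z b) (hle : dist a y ≤ dist a z) :
    MBtw a y z := by
  have hfour := RealTree.fourPoint y z a b
  rw [dist_comm y a, dist_comm z a] at hfour
  unfold MBtw at *
  have hmax : max (dist a y + dist z b) (dist y b + dist a z) ≤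
      dist a b - dist a y + dist a z := by
    apply max_le <;> linarith
  linarith [dist_triangle a y z]

theorem MBtw.eq_of_dist_eq (hy : MBtw a y b) (hz : MBtw a z b) (hd : dist a y = dist a z) :
    y = z := by
  have h := hy.of_dist_le hz hd.le
  unfold MBtw at h
  exact dist_le_zero.mp (by linarith)

theorem mconvex_seg (a b : T) : MConvex (seg a b) := by
  intro y hy z hz p hp
  wlog hle : dist a y ≤ dist a z generalizing y z
  · exact this z hz y hy hp.symm (le_of_not_ge hle)
  have hyz : MBtw a y z := MBtw.of_dist_le hy hz hle
  rw [mem_seg] at *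
  unfold MBtw at *
  linarith [dist_triangle a y p, dist_triangle p z b, dist_triangle a p b]

theorem MBtw.mbtw_or_mbtw (hO : MBtw a O b) (hp : MBtw a p b) : MBtw O p a ∨ MBtw O p b := by
  rcases le_total (dist a p) (dist a O) with hle | hle
  · exact Or.inl (hp.of_dist_le hO hle).symm
  · exact Or.inr (hp.trans_left_right (hO.of_dist_le hp hle))

theorem eq_or_eq_of_mbtw_of_mbtw_of_mbtw (hp : MBtw O p s) (hq : MBtw O q s) (hpq : MBtw p O q) :
    p = O ∨ q = O := by
  wlog hle : dist O p ≤ dist O q generalizing p q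
  · exact (this hq hp hpq.symm (le_of_not_ge hle)).symm
  have h := hp.of_dist_le hq hle
  unfold MBtw at h hpq
  left
  exact (dist_le_zero.mp (by linarith [dist_comm p O])).symm

theorem exists_median (u v w : T) : ∃ O : T, MBtw u O v ∧ MBtw u O w ∧ MBtw v O w ∧
    dist u O = (dist u v + dist u w - dist v w) / 2 := by
  have t₁ := dist_triangle u v w
  have t₂ := dist_triangle v u w
  have t₃ := dist_triangle u w v
  rw [dist_comm v u] at t₂
  rw [dist_comm w v] at t₃
  set r := (dist u v + dist u w - dist v w) / 2 with hr
  obtain ⟨O, hO, hOr⟩ := RealTree.exists_btw u v r ⟨by linarith, by linarith⟩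
  have hOv : dist O v = dist u v - r := by unfold MBtw at hO; linarith
  have hOw : dist O w = dist u w - r := by
    have hfour := RealTree.fourPoint O w u v
    rw [dist_comm O u, dist_comm w v, dist_comm w u, hOr, hOv] at hfour
    have hmax : max (r + dist v w) (dist u v - r + dist u w) ≤ dist u v - r + dist u w :=
      max_le (by linarith) le_rfl
    linarith [dist_triangle u O w]
  refine ⟨O, hO, ?_, ?_, hOr⟩
  · unfold MBtw; linarith
  · unfold MBtw; rw [dist_comm v O]; linarith

theorem seg_inter_seg_of_mbtw_of_seg_inter (huw : MBtw O u w) (hu : u ≠ O)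
    (hsep : seg O u ∩ seg O v = {O}) : seg O w ∩ seg O v = {O} := by
  refine Set.eq_singleton_iff_unique_mem.mpr ⟨⟨mbtw_self_left O w, mbtw_self_left O v⟩, ?_⟩
  rintro p ⟨hpw, hpv⟩
  rw [mem_seg] at hpw hpv
  by_contra hpO
  have hr : 0 < min (dist O p) (dist O u) :=
    lt_min (dist_pos.mpr (Ne.symm hpO)) (dist_pos.mpr (Ne.symm hu))
  obtain ⟨q, hq, hqr⟩ := RealTree.exists_btw O p _ ⟨hr.le, min_le_left _ _⟩
  -- `q` is a point of `(O, p]` close enough to `O` to lie on `[O, u]` as well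
  have hqu : MBtw O q u := (hpw.trans_left hq).of_dist_le huw (hqr ▸ min_le_right _ _)
  have hqO : q = O := hsep.subset ⟨hqu, hpv.trans_left hq⟩
  rw [hqO, dist_self] at hqr
  exact hr.ne hqr

theorem seg_union_seg (hO : MBtw a O b) : seg O a ∪ seg O b = seg a b := by
  ext p
  refine ⟨fun hp => hp.elim (fun hpa => hO.trans_left (mem_seg.mp hpa).symm)
    (fun hpb => (hO.symm.trans_left (mem_seg.mp hpb).symm).symm), hO.mbtw_or_mbtw⟩

theorem isTripod_seg_union_seg (hx : MBtw a x b) (he : MBtw a e b) (hxO : x ≠ O) (heO : e ≠ O)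
    (hxe : MBtw x O e) (hxw : MBtw x O w) (hew : MBtw e O w) (hwO : O ≠ w) :
    IsTripod (seg a b ∪ seg O w) := by
  have hO : MBtw a O b := mconvex_seg a b x hx e he hxe
  wlog hxb : MBtw O x b generalizing a b
  · have hxa : MBtw O x a := (hO.mbtw_or_mbtw hx).resolve_right hxb
    rw [seg_comm]
    exact this hx.symm he.symm hO.symm hxa
  have hea : MBtw O e a := by
    refine (hO.mbtw_or_mbtw he).resolve_right fun heb => ?_
    rcases eq_or_eq_of_mbtw_of_mbtw_of_mbtw hxb heb hxe with h | h
    exacts [hxO h, heO h]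
  have hOa : O ≠ a := by rintro rfl; exact heO hea.eq_of_left_eq_right
  have hOb : O ≠ b := by rintro rfl; exact hxO hxb.eq_of_left_eq_right
  refine ⟨O, a, b, w, hOa, hOb, hwO, by rw [seg_union_seg hO], seg_inter_seg_of_mbtw hO, ?_, ?_⟩
  · exact seg_inter_seg_of_mbtw_of_seg_inter hea heO (seg_inter_seg_of_mbtw hew)
  · exact seg_inter_seg_of_mbtw_of_seg_inter hxb hxO (seg_inter_seg_of_mbtw hxw)

end RealTree

section Action

variable {G T : Type*} [Group G] [MulAction G T]

theorem ptStab_antitone : Antitone (ptStab G : Set T → Subgroup G) :=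
  fun _ _ hXY _ hg x hx => hg x (hXY hx)

theorem le_ptStab_union {M : Subgroup G} {X Y : Set T} (hX : M ≤ ptStab G X)
    (hY : M ≤ ptStab G Y) : M ≤ ptStab G (X ∪ Y) :=
  fun _ hm x hx => hx.elim (hX hm x) (hY hm x)

theorem le_ptStab_smul {M : Subgroup G} {X : Set T} {h : G} (hM : M ≤ ptStab G X)
    (hh : h ∈ Subgroup.normalizer M) : M ≤ ptStab G (h • X) := by
  rintro m hm _ ⟨x, hx, rfl⟩
  have hconj : h⁻¹ * m * h ∈ M := by
    simpa using (Subgroup.mem_normalizer_iff.mp (inv_mem hh) m).mp hm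
  calc m • h • x = h • (h⁻¹ * m * h) • x := by simp [mul_smul]
    _ = h • x := by rw [hM hconj x hx]

variable [MetricSpace T]

theorem smul_seg {g : G} (hg : Isometry fun x : T => g • x) (x z : T) :
    g • seg x z = seg (g • x) (g • z) := by
  ext p
  rw [Set.mem_smul_set_iff_inv_smul_mem, mem_seg, mem_seg, MBtw, MBtw, ← hg.dist_eq x,
    ← hg.dist_eq _ z, ← hg.dist_eq x z, smul_inv_smul]

variable [RealTree T]

theorem exists_fixed_midpoint {h : G} (hh : Isometry fun x : T => h • x) {c : T}
    (hc : h • c = c) (x : T) :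
    ∃ O : T, h • O = O ∧ MBtw x O c ∧ MBtw c O (h • x) ∧ MBtw x O (h • x) ∧
      dist x O = dist x (h • x) / 2 := by
  obtain ⟨O, hxOc, hxOw, hcOw, hdist⟩ := exists_median x c (h • x)
  have hcw : dist c (h • x) = dist c x := by
    conv_lhs => rw [← hc]
    exact hh.dist_eq c x
  refine ⟨O, ?_, hxOc, hcOw, hxOw, by rw [hdist, hcw, dist_comm c x]; ring⟩
  -- `h • O` lies on `[c, h x]` at the same distance from `c` as `O`
  have hhO : h • O ∈ seg (h • x) c := by
    rw [← hc, ← smul_seg hh]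
    exact Set.smul_mem_smul_set hxOc
  refine (mem_seg.mp hhO).symm.eq_of_dist_eq hcOw ?_
  conv_lhs => rw [← hc]
  exact hh.dist_eq c O

theorem exists_isTripod_subset_union_smul {h : G} (hh : Isometry fun x : T => h • x)
    {a b c d x : T} (hcd : c ≠ d) (hc : c ∈ seg a b) (hd : d ∈ seg a b) (hx : x ∈ seg a b)
    (hhc : h • c = c) (hhd : h • d = d) (hhx : h • x ≠ x) :
    ∃ X, IsTripod X ∧ seg a b ⊆ X ∧ X ⊆ seg a b ∪ h • seg a b := by
  obtain ⟨O, hhO, hxOc, hcOw, hxOw, hdistO⟩ := exists_fixed_midpoint hh hhc x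
  obtain ⟨O', -, hxOd, hdOw, hxO'w, hdistO'⟩ := exists_fixed_midpoint hh hhd x
  obtain rfl : O = O' := hxOw.eq_of_dist_eq hxO'w (hdistO.trans hdistO'.symm)
  have hpos : 0 < dist x (h • x) := dist_pos.mpr hhx.symm
  have hxO : x ≠ O := dist_pos.mp (by linarith)
  have hOw : O ≠ h • x := dist_pos.mp (by unfold MBtw at hxOw; linarith)
  obtain ⟨e, he, heO, hxOe, heOw⟩ :
      ∃ e ∈ seg a b, e ≠ O ∧ MBtw x O e ∧ MBtw e O (h • x) := by
    by_cases hcO : c = O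
    · exact ⟨d, hd, fun hdO => hcd (hcO.trans hdO.symm), hxOd, hdOw⟩
    · exact ⟨c, hc, hcO, hxOc, hcOw⟩
  refine ⟨seg a b ∪ seg O (h • x), isTripod_seg_union_seg hx he hxO heO hxOe hxOw heOw hOw,
    Set.subset_union_left, Set.union_subset_union_right _ ?_⟩
  rw [← hhO, ← smul_seg hh]
  exact Set.smul_set_mono (mconvex_seg a b O (mconvex_seg a b x hx e he hxOe) x hx)

end Action

namespace Subgroup

variable {G : Type*} [Group G]

theorem index_normalCore_dvd_factorial (H : Subgroup G) [H.FiniteIndex] :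
    H.normalCore.index ∣ H.index.factorial := by
  rw [normalCore_eq_ker, index_ker, index_eq_card, ← Nat.card_perm]
  exact card_subgroup_dvd_card _

theorem relIndex_map_subtype {H : Subgroup G} (K : Subgroup H) :
    (K.map H.subtype).relIndex H = K.index := by
  simpa [← MonoidHom.range_eq_map] using relIndex_map_map_of_injective K ⊤ H.subtype_injective

theorem exists_le_relIndex_le_factorial_le_normalizer {A B : Subgroup G} (hAB : A ≤ B)
    (hA : A.relIndex B ≠ 0) :
    ∃ M ≤ A, M.relIndex A ≠ 0 ∧ M.relIndex A ≤ (A.relIndex B).factorial ∧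
      B ≤ normalizer M := by
  have : (A.subgroupOf B).FiniteIndex := ⟨hA⟩
  set C := (A.subgroupOf B).normalCore
  have hCB : C.map B.subtype ≤ B := map_subtype_le C
  have hCA : C.map B.subtype ≤ A := by
    simpa [subgroupOf_map_subtype, hAB] using
      map_mono (f := B.subtype) (normalCore_le (A.subgroupOf B))
  have hmul : (C.map B.subtype).relIndex A * A.relIndex B = C.index := by
    rw [relIndex_mul_relIndex _ _ _ hCA hAB, relIndex_map_subtype]
  have hdvd : (C.map B.subtype).relIndex A ∣ (A.relIndex B).factorial :=
    (Dvd.intro _ hmul).trans (index_normalCore_dvd_factorial _)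
  refine ⟨_, hCA, ne_zero_of_dvd_ne_zero (Nat.factorial_ne_zero _) hdvd,
    Nat.le_of_dvd (Nat.factorial_pos _) hdvd, ?_⟩
  rw [← normal_subgroupOf_iff_le_normalizer hCB, subgroupOf,
    comap_map_eq_self_of_injective B.subtype_injective]
  exact normalCore_normal _

theorem exists_le_relIndex_le_factorial_mem_normalizer {A B N : Subgroup G} (hAB : A < B)
    (hNB : N ≤ B) [Group.IsNilpotent N] (hN : N.relIndex B ≠ 0) :
    ∃ M ≤ A, M.relIndex A ≠ 0 ∧ M.relIndex A ≤ (N.relIndex B).factorial ∧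
      ∃ h ∈ B, h ∉ A ∧ h ∈ normalizer M := by
  by_cases hNA : N ≤ A
  · have hdvd : A.relIndex B ∣ N.relIndex B := relIndex_dvd_of_le_left B hNA
    obtain ⟨M, hMA, hM, hMle, hBM⟩ :=
      exists_le_relIndex_le_factorial_le_normalizer hAB.le (ne_zero_of_dvd_ne_zero hN hdvd)
    obtain ⟨h, hhB, hhA⟩ := SetLike.exists_of_lt hAB
    exact ⟨M, hMA, hM, hMle.trans (Nat.factorial_le (Nat.le_of_dvd (Nat.pos_of_ne_zero hN) hdvd)),
      h, hhB, hhA, hBM hhB⟩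
  · have hlt : (A ⊓ N).subgroupOf N < ⊤ :=
      lt_top_iff_ne_top.mpr fun htop => hNA ((subgroupOf_eq_top.mp htop).trans inf_le_left)
    obtain ⟨h, hhnorm, hhM⟩ :=
      SetLike.exists_of_lt (Group.normalizerCondition_of_isNilpotent _ hlt)
    rw [← subgroupOf_normalizer_eq inf_le_right, mem_subgroupOf] at hhnorm
    rw [mem_subgroupOf] at hhM
    refine ⟨A ⊓ N, inf_le_left, ?_, ?_, h, hNB h.2, fun hA => hhM ⟨hA, h.2⟩, hhnorm⟩
    · rw [inf_relIndex_left]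
      exact fun h0 => hN (relIndex_eq_zero_of_le_right hAB.le h0)
    · rw [inf_relIndex_left]
      exact (relIndex_le_of_le_right hAB.le hN).trans (Nat.self_le_factorial _)

theorem _root_.Group.fg_of_fg_of_finiteIndex (H : Subgroup G) [H.FiniteIndex] (hH : H.FG) :
    Group.FG G := by
  obtain ⟨S, hS, hSfin⟩ := (fg_iff H).mp hH
  let R := Set.range fun q : G ⧸ H => q.out
  refine Group.fg_iff.mpr
    ⟨S ∪ R, eq_top_iff.mpr fun g _ => ?_, hSfin.union (Set.finite_range _)⟩
  have hHle : H ≤ closure (S ∪ R) := hS ▸ closure_mono Set.subset_union_left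
  obtain ⟨h, hh⟩ := QuotientGroup.mk_out_eq_mul H g
  rw [show g = (g : G ⧸ H).out * (h : G)⁻¹ by rw [hh, mul_inv_cancel_right]]
  exact mul_mem (subset_closure (Or.inr ⟨_, rfl⟩)) (hHle (inv_mem h.2))

theorem FG.of_le_of_relIndex_ne_zero {H K : Subgroup G} (hH : H.FG) (hHK : H ≤ K)
    (hK : H.relIndex K ≠ 0) : K.FG := by
  have : (H.subgroupOf K).FiniteIndex := ⟨hK⟩
  have : Group.FG H := (Group.fg_iff_subgroup_fg H).mpr hH
  have : Group.FG (H.subgroupOf K) :=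
    Group.fg_of_surjective (f := (subgroupOfEquivOfLe hHK).symm.toMonoidHom)
      (subgroupOfEquivOfLe hHK).symm.surjective
  exact (Group.fg_iff_subgroup_fg K).mp
    (Group.fg_of_fg_of_finiteIndex _ ((Group.fg_iff_subgroup_fg _).mp this))

end Subgroup

/-- if arc stabilizers have nilpotent subgroups of index ≤ k and tripod
stabilizers are finitely generated, then the stabilizer of every unstable arc contains a
subgroup of index ≤ k! fixing a tripod pointwise; in particular it is finitely generated. -/
theorem stmt_17 {G T : Type*} [Group G] [MetricSpace T] [RealTree T] [MulAction G T]
    (iso : ∀ g : G, Isometry fun x : T => g • x) (k : ℕ)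
    (hnilp : ∀ I : Set T, IsArc I → ∃ N : Subgroup (↥(ptStab G I)),
      Group.IsNilpotent (↥N) ∧ N.index ≠ 0 ∧ N.index ≤ k)
    (htrip : ∀ X : Set T, IsTripod X → (ptStab G X).FG) :
    ∀ I : Set T, IsArc I →
      (∃ J, IsArc J ∧ J ⊆ I ∧ ptStab G I < ptStab G J) →
      (∃ B : Subgroup G, B ≤ ptStab G I ∧
        B.relIndex (ptStab G I) ≠ 0 ∧ B.relIndex (ptStab G I) ≤ k.factorial ∧
        ∃ X : Set T, IsTripod X ∧ B ≤ ptStab G X) ∧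
      (ptStab G I).FG := by
  rintro I ⟨a, b, -, rfl⟩ ⟨J, ⟨c, d, hcd, rfl⟩, hJI, hAB⟩
  obtain ⟨N, hN, hN0, hNk⟩ := hnilp _ ⟨c, d, hcd, rfl⟩
  have : Group.IsNilpotent (N.map (ptStab G (seg c d)).subtype) :=
    Group.nilpotent_of_mulEquiv (N.equivMapOfInjective _ (Subgroup.subtype_injective _))
  obtain ⟨M, hMA, hM0, hMle, h, hhB, hhA, hhM⟩ :=
    Subgroup.exists_le_relIndex_le_factorial_mem_normalizer hAB (Subgroup.map_subtype_le N)
      (by rwa [Subgroup.relIndex_map_subtype])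
  rw [Subgroup.relIndex_map_subtype] at hMle
  obtain ⟨x, hx, hhx⟩ : ∃ x ∈ seg a b, h • x ≠ x := by
    by_contra! hfix
    exact hhA hfix
  obtain ⟨X, hX, hIX, hXI⟩ := exists_isTripod_subset_union_smul (iso h) hcd
    (hJI (mbtw_self_left c d)) (hJI (mbtw_self_right c d)) hx
    (hhB c (mbtw_self_left c d)) (hhB d (mbtw_self_right c d)) hhx
  have hMX : M ≤ ptStab G X :=
    (le_ptStab_union hMA (le_ptStab_smul hMA hhM)).trans (ptStab_antitone hXI)
  refine ⟨⟨M, hMA, hM0, hMle.trans (Nat.factorial_le hNk), X, hX, hMX⟩, ?_⟩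
  exact (htrip X hX).of_le_of_relIndex_ne_zero (ptStab_antitone hIX)
    fun h0 => hM0 (Subgroup.relIndex_eq_zero_of_le_left hMX h0)
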